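/- arXiv:2301.06095 — 4 statements merged into one kernel-verified Lean document; each statement's English description precedes it below -/
import Mathlib

section
/- The infinite product defining the singular series 𝔖(H) = ∏_p (1 - ν_H(p)/p)/(1-1/p)^k converges: for all primes p not dividing any difference of two elements of H, ν_H(p) = k, and the factor equals (1 - k/p)/(1-1/p)^k = 1 + O_k(1/p^2), so the product over all primes converges absolutely. -/
open scoped BigOperators

/-- Number of distinct residue classes mod `p` occupied by elements of `H`. -/
noncomputable def nuH (H : Finset ℤ) (p : ℕ) : ℕ :=
  (H.image (fun n => (Int.cast n : ZMod p))).card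

/-!
If `p` divides no difference of two distinct elements of `H`, reduction mod `p` is injective on
`H`, so `ν_H(p) = k`; this holds for all but finitely many primes. For such `p` the local factor
is `(1 - k x) / (1 - x) ^ k` with `x = 1 / p`, and since `(1 - x) ^ k = 1 - k x + O(k² x²)` and
`(1 - x) ^ k ≥ 2 ^ (-k)`, it is `1 + O(k² 2 ^ k / p²)`. As `∑ 1 / p²` converges, the factors
minus one are summable, and a product `∏ (1 + a_p)` with summable `a_p` converges.
-/

open Filter

lemma nuH_eq_card_of_forall_not_dvd_sub {H : Finset ℤ} {p : ℕ}
    (h : ∀ a ∈ H, ∀ b ∈ H, a ≠ b → ¬ (p : ℤ) ∣ a - b) : nuH H p = H.card := by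
  refine Finset.card_image_of_injOn fun a ha b hb hab => ?_
  by_contra hne
  exact h b hb a ha (Ne.symm hne) ((ZMod.intCast_eq_intCast_iff_dvd_sub a b p).mp hab)

lemma Nat.Primes.eventually_not_dvd {n : ℤ} (hn : n ≠ 0) :
    ∀ᶠ p : Nat.Primes in cofinite, ¬ (p : ℤ) ∣ n := by
  have hlarge : ∀ᶠ p : Nat.Primes in cofinite, n.natAbs < p :=
    Nat.Primes.coe_nat_injective.tendsto_cofinite.eventually
      (Nat.cofinite_eq_atTop ▸ eventually_gt_atTop n.natAbs)
  filter_upwards [hlarge] with p hp hdvd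
  exact hp.not_ge (Nat.le_of_dvd (Int.natAbs_pos.mpr hn) (Int.natCast_dvd.mp hdvd))

lemma eventually_forall_not_dvd_sub (H : Finset ℤ) :
    ∀ᶠ p : Nat.Primes in cofinite, ∀ a ∈ H, ∀ b ∈ H, a ≠ b → ¬ (p : ℤ) ∣ a - b := by
  simp only [eventually_all_finset]
  intro a _ b _
  by_cases hab : a = b
  · exact Eventually.of_forall fun _ hne => absurd hab hne
  · filter_upwards [Nat.Primes.eventually_not_dvd (sub_ne_zero.mpr hab)] with p hp _ using hp

lemma abs_one_sub_mul_sub_one_sub_pow_le (k : ℕ) {x : ℝ} (h0 : 0 ≤ x) (h1 : x ≤ 1) :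
    |1 - k * x - (1 - x) ^ k| ≤ k ^ 2 * x ^ 2 := by
  induction k with
  | zero => simp
  | succ k ih =>
    have bernoulli : 1 - k * x ≤ (1 - x) ^ k := by
      simpa [sub_eq_add_neg] using one_add_mul_le_pow (show (-2 : ℝ) ≤ -x by linarith) k
    have hstep : |x * (1 - (1 - x) ^ k)| ≤ k * x ^ 2 := by
      rw [abs_of_nonneg (mul_nonneg h0 (sub_nonneg.mpr (pow_le_one₀ (by linarith) (by linarith))))]
      nlinarith
    calc |1 - ((k + 1 : ℕ) : ℝ) * x - (1 - x) ^ (k + 1)|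
        = |(1 - k * x - (1 - x) ^ k) - x * (1 - (1 - x) ^ k)| := by push_cast; ring_nf
      _ ≤ |1 - k * x - (1 - x) ^ k| + |x * (1 - (1 - x) ^ k)| := abs_sub _ _
      _ ≤ k ^ 2 * x ^ 2 + k * x ^ 2 := add_le_add ih hstep
      _ ≤ ((k + 1 : ℕ) : ℝ) ^ 2 * x ^ 2 := by push_cast; nlinarith [sq_nonneg x]

lemma abs_one_sub_div_div_one_sub_one_div_pow_sub_one_le (k : ℕ) {p : ℝ} (hp : 2 ≤ p) :
    |(1 - k / p) / (1 - 1 / p) ^ k - 1| ≤ k ^ 2 * 2 ^ k / p ^ 2 := by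
  have hx0 : 0 ≤ 1 / p := by positivity
  have hx : 1 / p ≤ 1 / 2 := one_div_le_one_div_of_le two_pos hp
  have hden : (1 / 2 : ℝ) ^ k ≤ (1 - 1 / p) ^ k := pow_le_pow_left₀ (by norm_num) (by linarith) k
  have hden0 : 0 < (1 - 1 / p) ^ k := lt_of_lt_of_le (by positivity) hden
  have hnum := abs_one_sub_mul_sub_one_sub_pow_le k hx0 (by linarith)
  rw [mul_one_div] at hnum
  rw [div_sub_one hden0.ne', abs_div, abs_of_pos hden0, div_le_iff₀ hden0]
  calc |1 - k / p - (1 - 1 / p) ^ k| ≤ k ^ 2 * (1 / p) ^ 2 := hnum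
    _ = k ^ 2 * 2 ^ k / p ^ 2 * (1 / 2) ^ k := by
        rw [one_div_pow, one_div_pow]; field_simp
    _ ≤ k ^ 2 * 2 ^ k / p ^ 2 * (1 - 1 / p) ^ k := by gcongr

theorem stmt_1 (k : ℕ) :
    ∃ C : ℝ, ∀ H : Finset ℤ, H.card = k →
      (∀ p : Nat.Primes,
          (∀ a ∈ H, ∀ b ∈ H, a ≠ b → ¬ ((p : ℤ) ∣ (a - b))) → nuH H (p : ℕ) = k) ∧
      (∀ p : Nat.Primes, nuH H (p : ℕ) = k →
          |(1 - (k : ℝ) / p) / (1 - 1 / (p : ℝ)) ^ k - 1| ≤ C / (p : ℝ) ^ 2) ∧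
      Multipliable (fun p : Nat.Primes =>
          (1 - (nuH H (p : ℕ) : ℝ) / p) / (1 - 1 / (p : ℝ)) ^ k) := by
  refine ⟨k ^ 2 * 2 ^ k, fun H hH => ?_⟩
  have nu_eq : ∀ p : Nat.Primes,
      (∀ a ∈ H, ∀ b ∈ H, a ≠ b → ¬ ((p : ℤ) ∣ (a - b))) → nuH H (p : ℕ) = k :=
    fun p hp => hH ▸ nuH_eq_card_of_forall_not_dvd_sub hp
  have factor_bound (p : Nat.Primes) :
      |(1 - (k : ℝ) / p) / (1 - 1 / (p : ℝ)) ^ k - 1| ≤ k ^ 2 * 2 ^ k / (p : ℝ) ^ 2 :=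
    abs_one_sub_div_div_one_sub_one_div_pow_sub_one_le k (by exact_mod_cast p.2.two_le)
  refine ⟨nu_eq, fun p _ => factor_bound p, ?_⟩
  have summable_bound : Summable fun p : Nat.Primes => (k : ℝ) ^ 2 * 2 ^ k / (p : ℝ) ^ 2 := by
    refine (((Real.summable_one_div_nat_pow.mpr one_lt_two).comp_injective
      Nat.Primes.coe_nat_injective).mul_left ((k : ℝ) ^ 2 * 2 ^ k)).congr fun p => ?_
    exact mul_one_div _ _
  have summable_sub_one : Summable fun p : Nat.Primes =>
      (1 - (nuH H (p : ℕ) : ℝ) / p) / (1 - 1 / (p : ℝ)) ^ k - 1 := by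
    refine summable_bound.of_norm_bounded_eventually ?_
    filter_upwards [eventually_forall_not_dvd_sub H] with p hp
    rw [nu_eq p hp]
    exact factor_bound p
  simpa using Real.multipliable_one_add_of_summable summable_sub_one
end

section
/- For a squarefree integer q and nonzero integer m, the sum over divisors d of q of μ(d)²/φ(d)² times the Ramanujan sum c_d(m) equals ∏_{p | q, p | m} (1 + 1/(p-1)) · ∏_{p | q, p ∤ m} (1 - 1/(p-1)²). -/
open scoped BigOperators Real

/-- `e(x) = exp(2πix)`. -/
noncomputable def e (x : ℝ) : ℂ := Complex.exp (2 * π * Complex.I * x)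

/-- The Ramanujan sum `c_d(m) = Σ_{1 ≤ a ≤ d, (a,d)=1} e(ma/d)`. -/
noncomputable def ramanujanSum (d : ℕ) (m : ℤ) : ℂ :=
  ∑ a ∈ (Finset.Icc 1 d).filter (fun a => Nat.Coprime a d), e ((m : ℝ) * a / d)

/-!
Grouping `a ∈ [1, d]` by `gcd a d` shows `∑_{k ∣ d} c_k(m) = ∑_{a=1}^{d} e(ma/d)`, which is `d` if
`d ∣ m` and `0` otherwise (a geometric sum of roots of unity). Möbius inversion then writes
`d ↦ c_d(m)` as `μ` convolved with a multiplicative function, so it is multiplicative, and so is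
`d ↦ μ(d)²/φ(d)² · c_d(m)`. For squarefree `q` the divisor sum is therefore the Euler product
`∏_{p ∣ q} (1 + c_p(m)/(p-1)²)`, where `c_p(m) = p·[p ∣ m] - 1`.
-/

open Finset ArithmeticFunction
open scoped ArithmeticFunction.Moebius ArithmeticFunction.zeta

lemma e_intCast_mul_div (m : ℤ) (a d : ℕ) :
    e (m * a / d) = (Complex.exp (2 * π * Complex.I / d) ^ m) ^ a := by
  rw [e, ← zpow_natCast, ← zpow_mul, ← Complex.exp_int_mul]
  congr 1
  push_cast
  ring

lemma sum_Icc_pow_eq_zero {K : Type*} [Field K] {x : K} {d : ℕ} (hx : x ^ d = 1)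
    (hx1 : x ≠ 1) :
    ∑ a ∈ Icc 1 d, x ^ a = 0 := by
  have hshift : ∑ a ∈ Icc 1 d, x ^ a = x * ∑ a ∈ range d, x ^ a := by
    simp_rw [mul_sum, ← pow_succ', range_eq_Ico, ← Ico_add_one_right_eq_Icc]
    exact (sum_Ico_add' (x ^ ·) 0 d 1).symm
  rw [hshift, geom_sum_eq hx1, hx, sub_self, zero_div, mul_zero]

lemma sum_Icc_e_intCast_mul_div (m : ℤ) {d : ℕ} (hd : d ≠ 0) :
    ∑ a ∈ Icc 1 d, e (m * a / d) = if (d : ℤ) ∣ m then (d : ℂ) else 0 := by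
  have hζ := Complex.isPrimitiveRoot_exp d hd
  simp_rw [e_intCast_mul_div]
  split_ifs with h
  · simp [(hζ.zpow_eq_one_iff_dvd m).2 h]
  · refine sum_Icc_pow_eq_zero ?_ (mt (hζ.zpow_eq_one_iff_dvd m).1 h)
    rw [← zpow_natCast, ← zpow_mul, mul_comm m, zpow_mul, zpow_natCast, hζ.pow_eq_one,
      one_zpow]

lemma sum_Icc_filter_gcd_eq_sum_filter_coprime {M : Type*} [AddCommMonoid M] (f : ℕ → M)
    {g : ℕ} (hg : g ≠ 0) (k : ℕ) :
    ∑ a ∈ Icc 1 (g * k) with a.gcd (g * k) = g, f a =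
      ∑ b ∈ Icc 1 k with b.Coprime k, f (g * b) := by
  symm
  apply sum_nbij (g * ·)
  · intro b hb
    simp only [mem_filter, mem_Icc] at hb ⊢
    obtain ⟨⟨hb1, hbk⟩, hcop⟩ := hb
    refine ⟨⟨?_, Nat.mul_le_mul_left g hbk⟩, ?_⟩
    · nlinarith [Nat.pos_of_ne_zero hg]
    · rw [Nat.gcd_mul_left, hcop, mul_one]
  · intro b _ c _ h
    exact Nat.eq_of_mul_eq_mul_left (Nat.pos_of_ne_zero hg) h
  · intro a ha
    simp only [coe_filter, mem_Icc, Set.mem_image, Set.mem_ofPred_eq] at ha ⊢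
    obtain ⟨⟨ha1, hak⟩, hgcd⟩ := ha
    obtain ⟨b, rfl⟩ : g ∣ a := hgcd ▸ Nat.gcd_dvd_left a (g * k)
    rw [Nat.gcd_mul_left, Nat.mul_eq_left hg] at hgcd
    refine ⟨b, ⟨⟨?_, ?_⟩, hgcd⟩, rfl⟩
    · rcases b with _ | b <;> simp_all
    · exact Nat.le_of_mul_le_mul_left hak (Nat.pos_of_ne_zero hg)
  · simp

lemma ramanujanSum_div_eq_sum_filter_gcd (m : ℤ) {d g : ℕ} (hd : d ≠ 0) (hgd : g ∣ d) :
    ramanujanSum (d / g) m = ∑ a ∈ Icc 1 d with a.gcd d = g, e (m * a / d) := by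
  obtain ⟨k, rfl⟩ := hgd
  have hg : g ≠ 0 := left_ne_zero_of_mul hd
  rw [sum_Icc_filter_gcd_eq_sum_filter_coprime _ hg,
    Nat.mul_div_cancel_left k (Nat.pos_of_ne_zero hg), ramanujanSum]
  refine sum_congr rfl fun b _ => congrArg e ?_
  push_cast
  rw [mul_left_comm, mul_div_mul_left _ _ (Nat.cast_ne_zero.2 hg)]

lemma sum_divisors_ramanujanSum (m : ℤ) {d : ℕ} (hd : d ≠ 0) :
    ∑ k ∈ d.divisors, ramanujanSum k m = if (d : ℤ) ∣ m then (d : ℂ) else 0 := calc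
  ∑ k ∈ d.divisors, ramanujanSum k m = ∑ g ∈ d.divisors, ramanujanSum (d / g) m :=
    (Nat.sum_div_divisors d _).symm
  _ = ∑ g ∈ d.divisors, ∑ a ∈ Icc 1 d with a.gcd d = g, e (m * a / d) :=
    sum_congr rfl fun _ hg => ramanujanSum_div_eq_sum_filter_gcd m hd (Nat.dvd_of_mem_divisors hg)
  _ = ∑ a ∈ Icc 1 d, e (m * a / d) :=
    sum_fiberwise_of_maps_to (fun a _ => Nat.mem_divisors.2 ⟨Nat.gcd_dvd_right a d, hd⟩) _
  _ = _ := sum_Icc_e_intCast_mul_div m hd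

lemma ramanujanSum_one (m : ℤ) : ramanujanSum 1 m = 1 := by
  simpa using sum_divisors_ramanujanSum m one_ne_zero

lemma ramanujanSum_prime (m : ℤ) {p : ℕ} (hp : p.Prime) :
    ramanujanSum p m = (if (p : ℤ) ∣ m then (p : ℂ) else 0) - 1 := by
  rw [← sum_divisors_ramanujanSum m hp.ne_zero, hp.sum_divisors, ramanujanSum_one,
    add_sub_cancel_right]

namespace ArithmeticFunction

noncomputable def idOnDivisorsOf (m : ℤ) : ArithmeticFunction ℂ :=
  ⟨fun d => if (d : ℤ) ∣ m then (d : ℂ) else 0, by simp⟩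

lemma idOnDivisorsOf_apply (m : ℤ) (d : ℕ) :
    idOnDivisorsOf m d = if (d : ℤ) ∣ m then (d : ℂ) else 0 := rfl

lemma isMultiplicative_idOnDivisorsOf (m : ℤ) : (idOnDivisorsOf m).IsMultiplicative := by
  refine ⟨by simp [idOnDivisorsOf_apply], fun {a b} hab => ?_⟩
  have hdvd : a * b ∣ m.natAbs ↔ a ∣ m.natAbs ∧ b ∣ m.natAbs :=
    ⟨fun h => ⟨dvd_of_mul_right_dvd h, dvd_of_mul_left_dvd h⟩,
      fun ⟨ha, hb⟩ => hab.mul_dvd_of_dvd_of_dvd ha hb⟩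
  simp only [idOnDivisorsOf_apply, Int.natCast_dvd, hdvd]
  split_ifs <;> simp_all

noncomputable def ramanujan (m : ℤ) : ArithmeticFunction ℂ :=
  ⟨(ramanujanSum · m), by simp [ramanujanSum]⟩

lemma coe_zeta_mul_ramanujan (m : ℤ) :
    (ζ : ArithmeticFunction ℂ) * ramanujan m = idOnDivisorsOf m := by
  ext d
  rcases eq_or_ne d 0 with rfl | hd
  · simp
  · rw [coe_zeta_mul_apply, idOnDivisorsOf_apply, ← sum_divisors_ramanujanSum m hd]
    rfl

lemma ramanujan_eq_coe_moebius_mul (m : ℤ) :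
    ramanujan m = (μ : ArithmeticFunction ℂ) * idOnDivisorsOf m := by
  rw [← coe_zeta_mul_ramanujan, ← mul_assoc, coe_moebius_mul_coe_zeta, one_mul]

lemma isMultiplicative_ramanujan (m : ℤ) : (ramanujan m).IsMultiplicative := by
  rw [ramanujan_eq_coe_moebius_mul]
  exact isMultiplicative_moebius.intCast.mul (isMultiplicative_idOnDivisorsOf m)

noncomputable def moebiusSqDivTotientSq : ArithmeticFunction ℂ :=
  ⟨fun d => (μ d : ℂ) ^ 2 / (Nat.totient d : ℂ) ^ 2, by simp⟩

lemma moebiusSqDivTotientSq_apply (d : ℕ) :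
    moebiusSqDivTotientSq d = (μ d : ℂ) ^ 2 / (Nat.totient d : ℂ) ^ 2 := rfl

lemma isMultiplicative_moebiusSqDivTotientSq : moebiusSqDivTotientSq.IsMultiplicative := by
  refine ⟨by simp [moebiusSqDivTotientSq_apply], fun {a b} hab => ?_⟩
  simp only [moebiusSqDivTotientSq_apply, isMultiplicative_moebius.map_mul_of_coprime hab,
    Nat.totient_mul hab]
  push_cast
  ring

end ArithmeticFunction

lemma one_add_moebius_sq_div_totient_sq_mul_ramanujanSum_prime (m : ℤ) {p : ℕ} (hp : p.Prime) :
    1 + (moebius p : ℂ) ^ 2 / (Nat.totient p : ℂ) ^ 2 * ramanujanSum p m =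
      if (p : ℤ) ∣ m then 1 + 1 / ((p : ℂ) - 1) else 1 - 1 / ((p : ℂ) - 1) ^ 2 := by
  have hp1 : (p : ℂ) - 1 ≠ 0 := sub_ne_zero.2 (Nat.cast_ne_one.2 hp.ne_one)
  rw [ramanujanSum_prime m hp, moebius_apply_prime hp, Nat.totient_prime hp,
    Nat.cast_sub hp.one_le, Nat.cast_one]
  split_ifs <;> field_simp <;> ring

theorem stmt_3_general (q : ℕ) (hq : Squarefree q) (m : ℤ) :
    ∑ d ∈ q.divisors,
        ((ArithmeticFunction.moebius d : ℂ) ^ 2 / (Nat.totient d : ℂ) ^ 2) * ramanujanSum d m =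
      ∏ p ∈ q.primeFactors,
        (if (p : ℤ) ∣ m then 1 + 1 / ((p : ℂ) - 1) else 1 - 1 / ((p : ℂ) - 1) ^ 2) := by
  have hmul := isMultiplicative_moebiusSqDivTotientSq.pmul (isMultiplicative_ramanujan m)
  calc _ = ∑ d ∈ q.divisors, (moebiusSqDivTotientSq.pmul (ramanujan m)) d := rfl
    _ = _ := (hmul.prodPrimeFactors_one_add_of_squarefree hq).symm
    _ = _ := prod_congr rfl fun p hp => one_add_moebius_sq_div_totient_sq_mul_ramanujanSum_prime m
      (Nat.prime_of_mem_primeFactors hp)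

theorem stmt_3 (q : ℕ) (hq : Squarefree q) (m : ℤ) (hm : m ≠ 0) :
    ∑ d ∈ q.divisors,
        ((ArithmeticFunction.moebius d : ℂ) ^ 2 / (Nat.totient d : ℂ) ^ 2) * ramanujanSum d m =
      ∏ p ∈ q.primeFactors,
        (if (p : ℤ) ∣ m then 1 + 1 / ((p : ℂ) - 1) else 1 - 1 / ((p : ℂ) - 1) ^ 2) :=
  stmt_3_general q hq m
end

section
/- For integers r ≥ 1, h ≥ 1, a residue class c mod r, and real α, the exponential sum E_{r,c}(α) = Σ_{m ≤ h, m ≡ c mod r} e(mα) satisfies |E_{r,c}(α)| ≤ F_r(α), where F_r(α) = (1/r) Σ_{n=1}^{r} min{h, 1/‖α + n/r‖} and ‖x‖ denotes the distance from x to the nearest integer. -/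
open scoped BigOperators Real

/-- `E_{r,c}(α) = Σ_{1 ≤ m ≤ h, m ≡ c (mod r)} e(mα)`. -/
noncomputable def Erc (r : ℕ) (c : ZMod r) (h : ℕ) (α : ℝ) : ℂ :=
  ∑ m ∈ (Finset.Icc 1 h).filter (fun m => (Nat.cast m : ZMod r) = c), e ((m : ℝ) * α)

/-- `F_r(α) = (1/r) Σ_{n=1}^r min{h, 1/‖α+n/r‖}`, with the convention that the
summand is `h` when `α + n/r` is an integer. -/
noncomputable def Fr (r h : ℕ) (α : ℝ) : ℝ :=
  (1 / r) * ∑ n ∈ Finset.Icc 1 r,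
    (if ‖((α + n / r : ℝ) : AddCircle (1 : ℝ))‖ = 0 then (h : ℝ)
      else min (h : ℝ) (1 / ‖((α + n / r : ℝ) : AddCircle (1 : ℝ))‖))

/-! Detecting `m ≡ c (mod r)` by the orthogonality relation
`(1/r) Σ_{n=1}^r e(n(m - c)/r) = [m ≡ c]` writes `E_{r,c}(α)` as an average of the `r` complete
sums `Σ_{m ≤ h} e(m(α + n/r))`, each twisted by a unimodular factor. Each complete sum is a
geometric series, hence of size at most `min{h, 2/|e(β) - 1|}`, and Jordan's inequality gives
`|e(β) - 1| = 2|sin πβ| ≥ 4‖β‖`. -/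

open Finset

lemma e_eq_toCircle (x : ℝ) : e x = AddCircle.toCircle (x : AddCircle (1 : ℝ)) := by
  rw [e, AddCircle.toCircle_apply_mk, Circle.coe_exp]
  push_cast
  ring_nf

lemma norm_e (x : ℝ) : ‖e x‖ = 1 := by
  rw [e_eq_toCircle, Circle.norm_coe]

lemma e_add (x y : ℝ) : e (x + y) = e x * e y := by
  simp only [e_eq_toCircle, AddCircle.coe_add, AddCircle.toCircle_add, Circle.coe_mul]

lemma e_natCast_mul (n : ℕ) (x : ℝ) : e (n * x) = e x ^ n := by
  rw [e_eq_toCircle, e_eq_toCircle, ← nsmul_eq_mul, AddCircle.coe_nsmul,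
    AddCircle.toCircle_nsmul, Circle.coe_pow]

lemma e_eq_one_iff (x : ℝ) : e x = 1 ↔ (x : AddCircle (1 : ℝ)) = 0 := by
  rw [e_eq_toCircle, ← Circle.coe_one, Circle.coe_inj, ← AddCircle.toCircle_zero,
    (AddCircle.injective_toCircle one_ne_zero).eq_iff]

lemma e_intCast (k : ℤ) : e k = 1 :=
  (e_eq_one_iff _).2 ((AddCircle.coe_eq_zero_iff 1).2 ⟨k, by simp⟩)

lemma four_mul_norm_le_norm_e_sub_one (x : ℝ) :
    4 * ‖(x : AddCircle (1 : ℝ))‖ ≤ ‖e x - 1‖ := by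
  rw [UnitAddCircle.norm_eq]
  set y := x - round x
  have hxy : (x : AddCircle (1 : ℝ)) = y := by
    rw [AddCircle.coe_sub, eq_comm, sub_eq_self]
    exact (AddCircle.coe_eq_zero_iff 1).2 ⟨round x, by simp⟩
  have hy : |y| ≤ 1 / 2 := abs_sub_round x
  have hsin : 2 * |y| ≤ |Real.sin (π * y)| := by
    have hπy : |π * y| = π * |y| := by rw [abs_mul, abs_of_pos Real.pi_pos]
    have := Real.mul_abs_le_abs_sin (x := π * y) (by rw [hπy]; nlinarith [Real.pi_pos])
    rwa [hπy, ← mul_assoc, div_mul_cancel₀ _ Real.pi_ne_zero] at this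
  have hey : ‖e y - 1‖ = 2 * |Real.sin (π * y)| := by
    rw [e, show 2 * (π : ℂ) * Complex.I * y = Complex.I * ((2 * π * y : ℝ) : ℂ) by
        push_cast; ring,
      Complex.norm_exp_I_mul_ofReal_sub_one, norm_mul, Real.norm_ofNat, Real.norm_eq_abs,
      show 2 * π * y / 2 = π * y by ring]
  rw [e_eq_toCircle, hxy, ← e_eq_toCircle, hey]
  linarith

lemma geom_sum_Icc_mul {R : Type*} [Ring R] (x : R) (n : ℕ) :
    (∑ i ∈ Icc 1 n, x ^ i) * (x - 1) = x ^ (n + 1) - x := by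
  rw [← Ico_add_one_right_eq_Icc, geom_sum_Ico_mul x (by omega), pow_one]

lemma norm_sum_Icc_pow_le {𝕜 : Type*} [NormedField 𝕜] {z : 𝕜} (hz : ‖z‖ = 1)
    (hz1 : z ≠ 1) (n : ℕ) : ‖∑ i ∈ Icc 1 n, z ^ i‖ ≤ 2 / ‖z - 1‖ := by
  rw [eq_div_of_mul_eq (sub_ne_zero.2 hz1) (geom_sum_Icc_mul z n), norm_div]
  gcongr
  calc ‖z ^ (n + 1) - z‖ ≤ ‖z ^ (n + 1)‖ + ‖z‖ := norm_sub_le _ _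
    _ = 2 := by rw [norm_pow, hz, one_pow]; norm_num

lemma sum_Icc_pow_eq_zero_s7 {R : Type*} [Ring R] [NoZeroDivisors R] {z : R} {n : ℕ}
    (hz : z ^ n = 1) (hz1 : z ≠ 1) : ∑ i ∈ Icc 1 n, z ^ i = 0 := by
  have h := geom_sum_Icc_mul z n
  rw [pow_succ', hz, mul_one, sub_self] at h
  exact (mul_eq_zero.1 h).resolve_right (sub_ne_zero.2 hz1)

lemma norm_sum_e_le_card (h : ℕ) (β : ℝ) : ‖∑ m ∈ Icc 1 h, e (m * β)‖ ≤ h :=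
  (norm_sum_le _ _).trans (by simp [norm_e])

lemma norm_sum_e_le_inv {β : ℝ} (hβ : (β : AddCircle (1 : ℝ)) ≠ 0) (h : ℕ) :
    ‖∑ m ∈ Icc 1 h, e (m * β)‖ ≤ 1 / (2 * ‖(β : AddCircle (1 : ℝ))‖) := by
  have hpos : 0 < ‖(β : AddCircle (1 : ℝ))‖ := norm_pos_iff.2 hβ
  simp_rw [e_natCast_mul]
  calc ‖∑ m ∈ Icc 1 h, e β ^ m‖ ≤ 2 / ‖e β - 1‖ :=
        norm_sum_Icc_pow_le (norm_e β) ((e_eq_one_iff β).not.2 hβ) h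
    _ ≤ 2 / (4 * ‖(β : AddCircle (1 : ℝ))‖) := by
        gcongr
        exact four_mul_norm_le_norm_e_sub_one β
    _ = 1 / (2 * ‖(β : AddCircle (1 : ℝ))‖) := by field_simp; ring

lemma norm_sum_e_le (h : ℕ) (β : ℝ) :
    ‖∑ m ∈ Icc 1 h, e (m * β)‖ ≤
      if ‖(β : AddCircle (1 : ℝ))‖ = 0 then (h : ℝ)
      else min (h : ℝ) (1 / ‖(β : AddCircle (1 : ℝ))‖) := by
  split_ifs with hβ
  · exact norm_sum_e_le_card h β
  · refine le_min (norm_sum_e_le_card h β) ?_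
    refine (norm_sum_e_le_inv (norm_ne_zero_iff.1 hβ) h).trans ?_
    gcongr
    linarith [norm_nonneg (β : AddCircle (1 : ℝ))]

lemma e_intCast_div_eq_one_iff {r : ℕ} (hr : r ≠ 0) (k : ℤ) :
    e (k / r) = 1 ↔ (k : ZMod r) = 0 := by
  rw [e_eq_one_iff, AddCircle.coe_eq_zero_iff, ZMod.intCast_zmod_eq_zero_iff_dvd]
  refine exists_congr fun j => ?_
  rw [zsmul_one, eq_div_iff (by exact_mod_cast hr), eq_comm, mul_comm]
  exact_mod_cast Iff.rfl

lemma sum_Icc_e_mul_div {r : ℕ} (hr : r ≠ 0) (k : ℤ) :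
    ∑ n ∈ Icc 1 r, e (n * (k / r)) = if (k : ZMod r) = 0 then (r : ℂ) else 0 := by
  simp_rw [e_natCast_mul]
  split_ifs with hk
  · simp [(e_intCast_div_eq_one_iff hr k).2 hk]
  · refine sum_Icc_pow_eq_zero_s7 ?_ ((e_intCast_div_eq_one_iff hr k).not.2 hk)
    rw [← e_natCast_mul, mul_div_cancel₀ _ (by exact_mod_cast hr), e_intCast]

lemma Erc_eq_mean_shifted_sums {r : ℕ} (hr : r ≠ 0) (c : ZMod r) (h : ℕ) (α : ℝ) :
    Erc r c h α = (1 / r) * ∑ n ∈ Icc 1 r,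
      e (-(n * (c.val / r))) * ∑ m ∈ Icc 1 h, e (m * (α + n / r)) := by
  have : NeZero r := ⟨hr⟩
  have indicator (m : ℕ) : (if (m : ZMod r) = c then (1 : ℂ) else 0) =
      (1 / r) * ∑ n ∈ Icc 1 r, e (n * (((m - c.val : ℤ) : ℝ) / r)) := by
    rw [sum_Icc_e_mul_div hr]
    push_cast
    simp only [ZMod.natCast_zmod_val, sub_eq_zero]
    split_ifs <;> simp [hr]
  rw [Erc, sum_filter]
  calc ∑ m ∈ Icc 1 h, (if (m : ZMod r) = c then e (m * α) else 0)
      = ∑ m ∈ Icc 1 h, (1 / r) * ∑ n ∈ Icc 1 r,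
          e (-(n * (c.val / r))) * e (m * (α + n / r)) := by
        refine sum_congr rfl fun m _ => ?_
        rw [← boole_mul, indicator m, mul_assoc, sum_mul]
        congr 1
        refine sum_congr rfl fun n _ => ?_
        rw [← e_add, ← e_add]
        congr 1
        push_cast
        ring
    _ = _ := by
        rw [← mul_sum, sum_comm]
        simp_rw [mul_sum]

theorem stmt_7_general (r h : ℕ) (hr : 1 ≤ r) (c : ZMod r) (α : ℝ) :
    ‖Erc r c h α‖ ≤ Fr r h α := by
  rw [Erc_eq_mean_shifted_sums (by omega), norm_mul, Fr, norm_div, norm_one, Complex.norm_natCast]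
  gcongr
  calc ‖∑ n ∈ Icc 1 r, e (-(n * (c.val / r))) * ∑ m ∈ Icc 1 h, e (m * (α + n / r))‖
      ≤ ∑ n ∈ Icc 1 r, ‖∑ m ∈ Icc 1 h, e (m * (α + n / r))‖ := by
        refine (norm_sum_le _ _).trans_eq (sum_congr rfl fun n _ => ?_)
        rw [norm_mul, norm_e, one_mul]
    _ ≤ _ := sum_le_sum fun n _ => norm_sum_e_le h _

theorem stmt_7 (r h : ℕ) (hr : 1 ≤ r) (hh : 1 ≤ h) (c : ZMod r) (α : ℝ) :
    ‖Erc r c h α‖ ≤ Fr r h α :=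
  stmt_7_general r h hr c α
end

section
/- Let f: ℝ → ℂ be a function with |f̂(ξ)| ≤ C|ξ|^{-2} for all ξ ≠ 0, such that Poisson summation holds for the function m ↦ f(m/h)e(mα). Then for h ≥ 1 and α ∈ ℝ, E_{f,h}(α) := Σ_{m ∈ ℤ} f(m/h) e(mα) satisfies E_{f,h}(α) = h·f̂(−h·ᾱ) + O_C(h^{-1}), where ᾱ is the unique representative of α mod 1 in [−1/2, 1/2). -/
open scoped BigOperators Real FourierTransform

/-- The representative of `α` modulo `1` lying in `[-1/2, 1/2)`. -/
noncomputable def rep (α : ℝ) : ℝ := Int.fract (α + 1 / 2) - 1 / 2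

/-!
After Poisson summation the error is `h` times the tail of `∑ₙ f̂(h(n - α))` with the term
`n = round α` removed, and that term is the main term `f̂(-h ᾱ)` since `ᾱ = α - round α`.
Every other term has `|n - α| ≥ |n - round α| / 2`, so quadratic decay bounds it by
`4C / (h² (n - round α)²)`, and the tail is `O(C / h²)`.
-/

theorem rep_eq_sub_round (α : ℝ) : rep α = α - round α := by
  rw [rep, Int.fract, round_eq]; ring

theorem abs_rep_le (α : ℝ) : |rep α| ≤ 1 / 2 :=
  rep_eq_sub_round α ▸ abs_sub_round α

theorem tsum_comp_int_sub_eq_tsum_comp_int_sub_rep {E : Type*} [AddCommMonoid E]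
    [TopologicalSpace E] (G : ℝ → E) (α : ℝ) :
    ∑' n : ℤ, G (n - α) = ∑' k : ℤ, G (k - rep α) := by
  conv_rhs => rw [← (Equiv.subRight (round α)).tsum_eq]
  congr 1 with n
  rw [Equiv.subRight_apply, rep_eq_sub_round]
  push_cast; ring_nf

theorem summable_inv_int_sq : Summable fun k : ℤ => ((k : ℝ) ^ 2)⁻¹ := by
  simpa [one_div] using (Real.summable_one_div_int_pow (p := 2)).2 one_lt_two

section QuadraticDecay

variable {E : Type*} [NormedAddCommGroup E] {F : ℝ → E} {C t β : ℝ}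

theorem norm_comp_mul_int_sub_le (hF : ∀ ξ : ℝ, ξ ≠ 0 → ‖F ξ‖ ≤ C * |ξ| ^ (-2 : ℝ))
    (ht : 0 < t) (hβ : |β| ≤ 1 / 2) {k : ℤ} (hk : k ≠ 0) :
    ‖F (t * (k - β))‖ ≤ 4 * C / t ^ 2 * ((k : ℝ) ^ 2)⁻¹ := by
  have hC : 0 ≤ C := by simpa using (norm_nonneg _).trans (hF 1 one_ne_zero)
  have hk1 : (1 : ℝ) ≤ |(k : ℝ)| := by exact_mod_cast Int.one_le_abs hk
  have hkβ : |(k : ℝ)| / 2 ≤ |(k : ℝ) - β| := by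
    linarith [abs_sub_abs_le_abs_sub (k : ℝ) β]
  have hpos : 0 < |(k : ℝ)| / 2 := by linarith
  calc ‖F (t * (k - β))‖ ≤ C * |t * (k - β)| ^ (-2 : ℝ) :=
        hF _ (mul_ne_zero ht.ne' (abs_pos.1 (hpos.trans_le hkβ)))
    _ = C / (t ^ 2 * |(k : ℝ) - β| ^ 2) := by
        rw [Real.rpow_neg (abs_nonneg _), abs_mul, abs_of_pos ht, Real.rpow_two, mul_pow,
          div_eq_mul_inv]
    _ ≤ C / (t ^ 2 * (|(k : ℝ)| / 2) ^ 2) := by gcongr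
    _ = 4 * C / t ^ 2 * ((k : ℝ) ^ 2)⁻¹ := by rw [div_pow, sq_abs]; field_simp; ring

variable (hF : ∀ ξ : ℝ, ξ ≠ 0 → ‖F ξ‖ ≤ C * |ξ| ^ (-2 : ℝ)) (ht : 0 < t)
  (hβ : |β| ≤ 1 / 2)
include hF ht hβ

theorem summable_comp_mul_int_sub [CompleteSpace E] : Summable fun k : ℤ => F (t * (k - β)) :=
  (summable_inv_int_sq.mul_left _).of_norm_bounded_eventually <|
    (Filter.eventually_cofinite_ne 0).mono fun _ hk => norm_comp_mul_int_sub_le hF ht hβ hk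

theorem norm_tsum_comp_mul_int_sub_sub_le [CompleteSpace E] :
    ‖∑' k : ℤ, F (t * (k - β)) - F (-t * β)‖ ≤ 4 * C / t ^ 2 * ∑' k : ℤ, ((k : ℝ) ^ 2)⁻¹ := by
  rw [(summable_comp_mul_int_sub hF ht hβ).tsum_eq_add_tsum_ite 0]
  simp only [Int.cast_zero, zero_sub, mul_neg, neg_mul, add_sub_cancel_left]
  -- the bound vanishes at `k = 0` because `(0 ^ 2)⁻¹ = 0`
  refine tsum_of_norm_bounded (summable_inv_int_sq.hasSum.mul_left _) fun k => ?_
  split_ifs with hk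
  · simp [hk]
  · exact norm_comp_mul_int_sub_le hF ht hβ hk

end QuadraticDecay

theorem stmt_8_general (C : ℝ) :
    ∃ K : ℝ, ∀ (f : ℝ → ℂ) (h : ℕ) (α : ℝ), 1 ≤ h →
      (∀ ξ : ℝ, ξ ≠ 0 → ‖𝓕 f ξ‖ ≤ C * |ξ| ^ (-2 : ℝ)) →
      (∑' m : ℤ, f ((m : ℝ) / h) * e ((m : ℝ) * α)
          = (h : ℂ) * ∑' n : ℤ, 𝓕 f ((h : ℝ) * ((n : ℝ) - α))) →
      ‖(∑' m : ℤ, f ((m : ℝ) / h) * e ((m : ℝ) * α))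
          - (h : ℂ) * 𝓕 f (-(h : ℝ) * rep α)‖ ≤ K / h := by
  refine ⟨4 * C * ∑' k : ℤ, ((k : ℝ) ^ 2)⁻¹, fun f h α h_one_le hF hPoisson => ?_⟩
  have hh : (0 : ℝ) < h := by exact_mod_cast h_one_le
  rw [hPoisson, tsum_comp_int_sub_eq_tsum_comp_int_sub_rep (fun x => 𝓕 f (h * x)), ← mul_sub,
    norm_mul, Complex.norm_natCast]
  calc (h : ℝ) * ‖∑' k : ℤ, 𝓕 f (h * (k - rep α)) - 𝓕 f (-h * rep α)‖
      ≤ h * (4 * C / h ^ 2 * ∑' k : ℤ, ((k : ℝ) ^ 2)⁻¹) := by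
        gcongr
        exact norm_tsum_comp_mul_int_sub_sub_le hF hh (abs_rep_le α)
    _ = 4 * C * (∑' k : ℤ, ((k : ℝ) ^ 2)⁻¹) / h := by field_simp

theorem stmt_8 (C : ℝ) (hC : 0 < C) :
    ∃ K : ℝ, ∀ (f : ℝ → ℂ) (h : ℕ) (α : ℝ), 1 ≤ h →
      (∀ ξ : ℝ, ξ ≠ 0 → ‖𝓕 f ξ‖ ≤ C * |ξ| ^ (-2 : ℝ)) →
      (∑' m : ℤ, f ((m : ℝ) / h) * e ((m : ℝ) * α)
          = (h : ℂ) * ∑' n : ℤ, 𝓕 f ((h : ℝ) * ((n : ℝ) - α))) →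
      ‖(∑' m : ℤ, f ((m : ℝ) / h) * e ((m : ℝ) * α))
          - (h : ℂ) * 𝓕 f (-(h : ℝ) * rep α)‖ ≤ K / h :=
  stmt_8_general C
end
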